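/- arXiv:2001.08368 — 3 statements merged into one kernel-verified Lean document; each statement's English description precedes it below -/
import Mathlib

section
/- Let R be a (not necessarily unital) associative ring and let a, b, c ∈ R. Suppose a has an annihilator (b,c)-inverse and x_l is a left annihilator (b,c)-inverse of a. Then ∘b ⊆ ∘(x_l·a·x_l) and x_l·a·x_l·a·x_l = x_l·a·x_l. -/
/-!
Let `x` be an annihilator `(b,c)`-inverse of `a` and `y` a left annihilator one. Since
`(x a - y a) b = 0` and `∘b ⊆ ∘x`, we get `y a x = x a x = x`; dually `c (a y - a x a y) = 0`
and `c∘ ⊆ y∘` give `y a y = y a x a y = x a y`. Both claims follow by substituting `x a y`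
for `y a y`.
-/

/-- `x` is an annihilator `(b,c)`-inverse of `a`. -/
def IsAnnBCInv {R : Type*} [NonUnitalRing R] (a b c x : R) : Prop :=
  x * a * x = x ∧ x * a * b = b ∧ c * a * x = c ∧
    (∀ r : R, r * b = 0 → r * x = 0) ∧ (∀ r : R, c * r = 0 → x * r = 0)

/-- `x` is a left annihilator `(b,c)`-inverse of `a`. -/
def IsLAnnBCInv {R : Type*} [NonUnitalRing R] (a b c x : R) : Prop :=
  x * a * b = b ∧ (∀ r : R, c * r = 0 → x * r = 0)

namespace IsAnnBCInv

variable {R : Type*} [NonUnitalRing R] {a b c x y : R}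

theorem mul_mul_left_eq_self (hx : IsAnnBCInv a b c x) (hy : y * a * b = b) :
    y * a * x = x := by
  obtain ⟨hxax, hxab, -, hb, -⟩ := hx
  have hdiff : (x * a - y * a) * b = 0 := by rw [sub_mul, hxab, hy, sub_self]
  have := hb _ hdiff
  rwa [sub_mul, hxax, sub_eq_zero, eq_comm] at this

theorem mul_mul_eq_mul_mul (hx : IsAnnBCInv a b c x) (hy : IsLAnnBCInv a b c y) :
    y * a * y = x * a * y := by
  have hyax := hx.mul_mul_left_eq_self hy.1
  have hdiff : c * (a * y - a * x * (a * y)) = 0 := by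
    linear_combination (norm := noncomm_ring) -hx.2.2.1 * (a * y)
  have := hy.2 _ hdiff
  linear_combination (norm := noncomm_ring) this + hyax * (a * y)

theorem mul_mul_mul_mul_eq_self (hx : IsAnnBCInv a b c x) (hy : IsLAnnBCInv a b c y) :
    y * a * y * a * y = y * a * y := by
  have hxy := hx.mul_mul_eq_mul_mul hy
  calc y * a * y * a * y = x * a * y * a * y := by rw [hxy]
    _ = x * a * (y * a * y) := by simp only [mul_assoc]
    _ = x * a * (x * a * y) := by rw [hxy]
    _ = x * a * x * a * y := by simp only [mul_assoc]
    _ = y * a * y := by rw [hx.1, hxy]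

end IsAnnBCInv

theorem lann_lemma {R : Type*} [NonUnitalRing R] (a b c xl : R)
    (h : ∃ x : R, IsAnnBCInv a b c x) (hl : IsLAnnBCInv a b c xl) :
    (∀ r : R, r * b = 0 → r * (xl * a * xl) = 0) ∧
      xl * a * xl * a * xl = xl * a * xl := by
  obtain ⟨x, hx⟩ := h
  refine ⟨fun r hr => ?_, hx.mul_mul_mul_mul_eq_self hl⟩
  rw [hx.mul_mul_eq_mul_mul hl, ← mul_assoc, ← mul_assoc, hx.2.2.2.1 r hr, zero_mul, zero_mul]
end

section
/- Let R be a (not necessarily unital) associative ring and let a ∈ R. Then a has a Drazin inverse if and only if there exists a positive integer m such that a has an annihilator (a^m,a^m)-inverse. Moreover, if x is a Drazin inverse of a and y is an annihilator (a^m,a^m)-inverse of a for some positive integer m, then x = y. -/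
/-!
A Drazin inverse `x` of `a` of index `n` is an annihilator `(aⁿ, aⁿ)`-inverse of `a`, since
`x = x^(n+1) aⁿ = aⁿ x^(n+1)` lies in both `R aⁿ` and `aⁿ R`. Conversely, for an annihilator
`(aᵐ, aᵐ)`-inverse `y` the element `ay - ya` annihilates `aᵐ` from the left and from the right,
hence annihilates `y` on both sides; this gives `ayy = y = yya`, and then `ay = ya`.
Annihilator `(b, c)`-inverses are unique, and a Drazin inverse of index `n` also has every
index `≥ n`, so two Drazin inverses are annihilator `(aⁿ, aⁿ)`-inverses for a common `n` and
coincide.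
-/

/-- `pw a n = a ^ (n + 1)`, powers in a non-unital ring. -/
def pw {R : Type*} [NonUnitalRing R] (a : R) : ℕ → R
  | 0 => a
  | n + 1 => pw a n * a

/-- `t` is a Drazin inverse of `d`: for some positive integer `m`,
`d^(m+1) * t = d^m`, together with `t * t * d = t` and `d * t = t * d`.
Here `pw d k = d^(k+1)`, so the exponent condition ranges over positive integers. -/
def IsDrazinInv {R : Type*} [NonUnitalRing R] (d t : R) : Prop :=
  (∃ m : ℕ, pw d (m + 1) * t = pw d m) ∧ t * t * d = t ∧ d * t = t * d

section NonUnitalRing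

variable {R : Type*} [NonUnitalRing R]

theorem pw_succ' (a : R) (n : ℕ) : pw a (n + 1) = a * pw a n := by
  induction n with
  | zero => rfl
  | succ n ih =>
    calc pw a (n + 2) = pw a (n + 1) * a := rfl
      _ = a * (pw a n * a) := by rw [ih, mul_assoc]

theorem Commute.pw_left {a x : R} (h : Commute a x) (n : ℕ) : Commute (pw a n) x := by
  induction n with
  | zero => exact h
  | succ n ih => exact ih.mul_left h

theorem pw_succ_mul_of_le {a x : R} {m n : ℕ} (hm : pw a (m + 1) * x = pw a m) (hmn : m ≤ n) :
    pw a (n + 1) * x = pw a n := by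
  induction n, hmn using Nat.le_induction with
  | base => exact hm
  | succ n _ ih => rw [pw_succ' a (n + 1), mul_assoc, ih, ← pw_succ']

theorem pw_succ_mul_pw_eq_self {a x : R} (hxx : x * x * a = x) (hc : Commute a x) (n : ℕ) :
    pw x (n + 1) * pw a n = x := by
  induction n with
  | zero => exact hxx
  | succ n ih =>
    calc pw x (n + 2) * pw a (n + 1) = pw x (n + 1) * (x * pw a n) * a := by
          simp only [pw, mul_assoc]
      _ = pw x (n + 1) * pw a n * x * a := by rw [← (hc.pw_left n).eq]; simp only [mul_assoc]
      _ = x := by rw [ih, hxx]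

theorem IsAnnBCInv.unique {a b c x y : R} (hx : IsAnnBCInv a b c x) (hy : IsAnnBCInv a b c y) :
    x = y := by
  obtain ⟨hxax, hxb, hcx, -, hxr⟩ := hx
  obtain ⟨hyay, hyb, hcy, hyl, -⟩ := hy
  have hxay : x * a * y = y := by
    have h := hyl (x * a - y * a) (by rw [sub_mul, hxb, hyb, sub_self])
    rwa [sub_mul, sub_eq_zero, hyay] at h
  have hxax' : x * a * y = x := by
    have h := hxr (a * x - a * y) (by rw [mul_sub, ← mul_assoc, ← mul_assoc, hcx, hcy, sub_self])
    rwa [mul_sub, sub_eq_zero, ← mul_assoc, ← mul_assoc, hxax, eq_comm] at h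
  rw [← hxax', hxay]

theorem isAnnBCInv_pw_of_pw_succ_mul {a x : R} {n : ℕ} (hn : pw a (n + 1) * x = pw a n)
    (hxx : x * x * a = x) (hc : Commute a x) : IsAnnBCInv a (pw a n) (pw a n) x := by
  have hx_right : pw x (n + 1) * pw a n = x := pw_succ_mul_pw_eq_self hxx hc n
  have hx_left : pw a n * pw x (n + 1) = x := by
    rw [← ((hc.pw_left n).symm.pw_left (n + 1)).eq, hx_right]
  refine ⟨by rw [mul_assoc, hc.eq, ← mul_assoc, hxx], ?_, hn, ?_, ?_⟩
  · rw [mul_assoc, ← pw_succ', ← (hc.pw_left (n + 1)).eq, hn]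
  · intro r hr
    rw [← hx_left, ← mul_assoc, hr, zero_mul]
  · intro r hr
    rw [← hx_right, mul_assoc, hr, mul_zero]

theorem IsDrazinInv.exists_isAnnBCInv_pw {a x : R} (hx : IsDrazinInv a x) :
    ∃ k, ∀ n, k ≤ n → IsAnnBCInv a (pw a n) (pw a n) x := by
  obtain ⟨⟨k, hk⟩, hxx, hc⟩ := hx
  exact ⟨k, fun n hn => isAnnBCInv_pw_of_pw_succ_mul (pw_succ_mul_of_le hk hn) hxx hc⟩

theorem IsDrazinInv.unique {a x y : R} (hx : IsDrazinInv a x) (hy : IsDrazinInv a y) : x = y := by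
  obtain ⟨k, hxk⟩ := hx.exists_isAnnBCInv_pw
  obtain ⟨l, hyl⟩ := hy.exists_isAnnBCInv_pw
  exact (hxk _ (le_max_left k l)).unique (hyl _ (le_max_right k l))

theorem IsAnnBCInv.isDrazinInv {a y : R} {m : ℕ} (hy : IsAnnBCInv a (pw a m) (pw a m) y) :
    IsDrazinInv a y := by
  obtain ⟨hyay, hyb, hcy, hyl, hyr⟩ := hy
  have hy_pw : y * pw a (m + 1) = pw a m := by rw [pw_succ', ← mul_assoc, hyb]
  have hpw_y : pw a (m + 1) * y = pw a m := hcy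
  have hay_pw : a * y * pw a m = pw a m := by
    calc a * y * pw a m = a * (y * pw a (m + 1)) * y := by rw [← hpw_y]; simp only [mul_assoc]
      _ = pw a m := by rw [hy_pw, ← pw_succ', hpw_y]
  have hpw_ya : pw a m * y * a = pw a m := by
    calc pw a m * y * a = y * (pw a (m + 1) * y) * a := by rw [← hy_pw]; simp only [mul_assoc]
      _ = pw a m := by rw [hpw_y, mul_assoc, ← pw, hy_pw]
  have hayy : a * y * y = y := by
    have h := hyl (a * y - y * a) (by rw [sub_mul, hay_pw, mul_assoc, ← pw_succ', hy_pw, sub_self])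
    rwa [sub_mul, sub_eq_zero, hyay] at h
  have hyya : y * y * a = y := by
    have h := hyr (a * y - y * a)
      (by rw [mul_sub, ← mul_assoc, ← mul_assoc, hpw_ya, ← pw, hpw_y, sub_self])
    rwa [mul_sub, sub_eq_zero, ← mul_assoc, ← mul_assoc, hyay, eq_comm] at h
  refine ⟨⟨m, hpw_y⟩, hyya, ?_⟩
  calc a * y = a * (y * y * a) := by rw [hyya]
    _ = a * y * y * a := by simp only [mul_assoc]
    _ = y * a := by rw [hayy]

end NonUnitalRing

theorem drazin_iff_ann_pow {R : Type*} [NonUnitalRing R] (a : R) :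
    ((∃ x : R, IsDrazinInv a x) ↔
      (∃ (m : ℕ) (y : R), IsAnnBCInv a (pw a m) (pw a m) y)) ∧
    (∀ (x y : R) (m : ℕ), IsDrazinInv a x → IsAnnBCInv a (pw a m) (pw a m) y →
      x = y) := by
  refine ⟨⟨fun ⟨x, hx⟩ => ?_, fun ⟨m, y, hy⟩ => ⟨y, hy.isDrazinInv⟩⟩,
    fun x y m hx hy => hx.unique hy.isDrazinInv⟩
  obtain ⟨k, hk⟩ := hx.exists_isAnnBCInv_pw
  exact ⟨k, x, hk k le_rfl⟩
end

section
/- Let R be a (not necessarily unital) associative ring, let a_i, b_i, c_i ∈ R and suppose x_i is an annihilator (b_i,c_i)-inverse of a_i for i = 1, 2. Then x₂·x₁ is an annihilator (b₂,c₁)-inverse of a₁·a₂ if and only if x₂·x₁·a₁·a₂·b₂ = b₂ and c₁·a₁·a₂·x₂·x₁ = c₁. -/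
namespace IsAnnBCInv

variable {R : Type*} [NonUnitalRing R] {a b c x : R}

/-- `r` and `x * a` agree on `b`, hence on `x` because `∘b ⊆ ∘x`. -/
theorem mul_eq_self_of_mul_eq (h : IsAnnBCInv a b c x) {r : R} (hr : r * b = b) :
    r * x = x := by
  obtain ⟨hxax, hxab, -, hann, -⟩ := h
  have hdiff : (r - x * a) * x = 0 := hann _ (by rw [sub_mul, hr, hxab, sub_self])
  rwa [sub_mul, sub_eq_zero, hxax] at hdiff

theorem mul_mul_right_eq_zero (h : IsAnnBCInv a b c x) {r : R} (hr : r * b = 0) (y : R) :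
    r * (x * y) = 0 := by
  rw [← mul_assoc, h.2.2.2.1 r hr, zero_mul]

theorem mul_mul_left_eq_zero (h : IsAnnBCInv a b c x) {r : R} (hr : c * r = 0) (y : R) :
    y * x * r = 0 := by
  rw [mul_assoc, h.2.2.2.2 r hr, mul_zero]

end IsAnnBCInv

theorem reverse_order_law_iff {R : Type*} [NonUnitalRing R]
    (a₁ b₁ c₁ x₁ a₂ b₂ c₂ x₂ : R)
    (h₁ : IsAnnBCInv a₁ b₁ c₁ x₁) (h₂ : IsAnnBCInv a₂ b₂ c₂ x₂) :
    IsAnnBCInv (a₁ * a₂) b₂ c₁ (x₂ * x₁) ↔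
      x₂ * x₁ * (a₁ * a₂) * b₂ = b₂ ∧ c₁ * (a₁ * a₂) * (x₂ * x₁) = c₁ := by
  refine ⟨fun h => ⟨h.2.1, h.2.2.1⟩, fun ⟨hb, hc⟩ => ⟨?_, hb, hc,
    fun r hr => h₂.mul_mul_right_eq_zero hr x₁, fun r hr => h₁.mul_mul_left_eq_zero hr x₂⟩⟩
  have hx₂ : x₂ * x₁ * (a₁ * a₂) * x₂ = x₂ := h₂.mul_eq_self_of_mul_eq hb
  calc x₂ * x₁ * (a₁ * a₂) * (x₂ * x₁) = x₂ * x₁ * (a₁ * a₂) * x₂ * x₁ := by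
        simp only [mul_assoc]
    _ = x₂ * x₁ := by rw [hx₂]
end
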